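/- Let n ≥ 1 and n/(n+1) < r ≤ 1. Let j, j' ∈ ℤ and set s = 2^{j∨j'}. For each dyadic cube I' ⊂ ℝ^n of side 2^{j'} choose x_{I'} ∈ I' and a_{I'} ≥ 0. Then for all u ∈ ℝ^n, Σ_{I'} |I'| a_{I'} · s^{-n} (1 + s^{-1}|u − x_{I'}|)^{-(n+1)} ≤ C · 2^{n(j∨j' − j')(1/r − 1)} · [M(Σ_{I'} a_{I'}^r χ_{I'})(u)]^{1/r}, where M is the Hardy–Littlewood maximal operator and C depends only on n and r. -/

import Mathlib

open MeasureTheory Real Set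
open scoped ENNReal

noncomputable section

/-- The dyadic cube of ℝ^n with side length `2^j` indexed by `k ∈ ℤ^n`. -/
def dyadicCube (n : ℕ) (j : ℤ) (k : Fin n → ℤ) : Set (EuclideanSpace ℝ (Fin n)) :=
  {x | ∀ i, (k i : ℝ) * 2 ^ j ≤ x i ∧ x i < ((k i : ℝ) + 1) * 2 ^ j}

/-- The Hardy–Littlewood maximal operator (averages over balls containing the point). -/
def hlMax (n : ℕ) (f : EuclideanSpace ℝ (Fin n) → ℝ≥0∞) (x : EuclideanSpace ℝ (Fin n)) :
    ℝ≥0∞ :=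
  ⨆ (c : EuclideanSpace ℝ (Fin n)) (ρ : ℝ) (_ : x ∈ Metric.ball c ρ),
    (volume (Metric.ball c ρ))⁻¹ * ∫⁻ y in Metric.ball c ρ, f y

/-!
Sort the cubes by the dyadic annulus `2^{m-1} s ≤ |u - x_{I'}| < 2^m s` that contains the sample
point (`annulusIndex`). On the `m`-th annulus the profile is at most `s^{-n} 2^{(n+1)(1-m)}`, and
all cubes of that annulus lie in the ball `B = B(u, (1 + √n) 2^m s)`. Since `r ≤ 1`,
`∑ a ≤ (∑ a^r)^{1/r} ≤ (|B| / |I'| · M(∑ a^r χ_{I'})(u))^{1/r}`,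
with `|B| / |I'| = c_n 2^{n(m + j∨j' - j')}`. The sum over `m` is then a geometric series of
ratio `2^{n/r - (n+1)}`, which is `< 1` exactly when `r > n/(n+1)`.
-/

lemma dyadicCube_eq_preimage (n : ℕ) (j : ℤ) (k : Fin n → ℤ) :
    dyadicCube n j k = (MeasurableEquiv.toLp 2 (Fin n → ℝ)).symm ⁻¹'
      univ.pi fun i => Ico ((k i : ℝ) * 2 ^ j) ((k i + 1) * 2 ^ j) := by
  ext x
  simp [dyadicCube]

lemma measurableSet_dyadicCube (n : ℕ) (j : ℤ) (k : Fin n → ℤ) :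
    MeasurableSet (dyadicCube n j k) := by
  rw [dyadicCube_eq_preimage]
  exact (MeasurableEquiv.toLp 2 _).symm.measurable (.univ_pi fun _ => measurableSet_Ico)

lemma ENNReal.ofReal_two_zpow (j : ℤ) : ENNReal.ofReal (2 ^ j) = 2 ^ j := by
  rw [← Real.rpow_intCast, ← ENNReal.ofReal_rpow_of_pos two_pos, ENNReal.ofReal_ofNat,
    ENNReal.rpow_intCast]

lemma volume_dyadicCube (n : ℕ) (j : ℤ) (k : Fin n → ℤ) :
    volume (dyadicCube n j k) = (2 : ℝ≥0∞) ^ (j * n) := by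
  rw [dyadicCube_eq_preimage,
    (EuclideanSpace.volume_preserving_symm_measurableEquiv_toLp (Fin n)).measure_preimage
      (MeasurableSet.univ_pi fun _ => measurableSet_Ico).nullMeasurableSet, volume_pi_pi]
  simp_rw [Real.volume_Ico, ← sub_mul, add_sub_cancel_left, one_mul, ENNReal.ofReal_two_zpow]
  rw [Finset.prod_const, Finset.card_univ, Fintype.card_fin, ← ENNReal.rpow_natCast,
    ← ENNReal.rpow_intCast, ← ENNReal.rpow_intCast, ← ENNReal.rpow_mul]
  norm_cast

lemma norm_sub_le_of_mem_dyadicCube {n : ℕ} {j : ℤ} {k : Fin n → ℤ}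
    {x y : EuclideanSpace ℝ (Fin n)} (hx : x ∈ dyadicCube n j k) (hy : y ∈ dyadicCube n j k) :
    ‖x - y‖ ≤ √n * 2 ^ j := by
  have hcoord : ∀ i, ‖(x - y) i‖ ^ 2 ≤ ((2 : ℝ) ^ j) ^ 2 := fun i => by
    obtain ⟨hx₁, hx₂⟩ := hx i
    obtain ⟨hy₁, hy₂⟩ := hy i
    rw [PiLp.sub_apply, Real.norm_eq_abs, sq_abs]
    exact sq_le_sq' (by linarith) (by linarith)
  calc ‖x - y‖ = √(∑ i, ‖(x - y) i‖ ^ 2) := EuclideanSpace.norm_eq _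
    _ ≤ √(n * ((2 : ℝ) ^ j) ^ 2) := by
      gcongr
      simpa using Finset.sum_le_card_nsmul Finset.univ _ _ fun i _ => hcoord i
    _ = √n * 2 ^ j := by rw [Real.sqrt_mul n.cast_nonneg, Real.sqrt_sq (by positivity)]

lemma dyadicCube_subset_ball {n : ℕ} {j : ℤ} {k : Fin n → ℤ} {x u : EuclideanSpace ℝ (Fin n)}
    {ρ : ℝ} (hx : x ∈ dyadicCube n j k) (hu : ‖u - x‖ < ρ) :
    dyadicCube n j k ⊆ Metric.ball u (ρ + √n * 2 ^ j) := fun y hy => by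
  rw [Metric.mem_ball, dist_eq_norm]
  have hyu := norm_sub_le_norm_sub_add_norm_sub y x u
  rw [norm_sub_rev x u] at hyu
  linarith [norm_sub_le_of_mem_dyadicCube hy hx]

lemma le_hlMax {n : ℕ} (f : EuclideanSpace ℝ (Fin n) → ℝ≥0∞) {u c : EuclideanSpace ℝ (Fin n)}
    {ρ : ℝ} (hu : u ∈ Metric.ball c ρ) :
    (volume (Metric.ball c ρ))⁻¹ * ∫⁻ y in Metric.ball c ρ, f y ≤ hlMax n f u :=
  le_iSup₂_of_le c ρ (le_iSup_of_le hu le_rfl)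

lemma setLIntegral_ball_le_volume_mul_hlMax {n : ℕ} (f : EuclideanSpace ℝ (Fin n) → ℝ≥0∞)
    {u c : EuclideanSpace ℝ (Fin n)} {ρ : ℝ} (hu : u ∈ Metric.ball c ρ) :
    ∫⁻ y in Metric.ball c ρ, f y ≤ volume (Metric.ball c ρ) * hlMax n f u :=
  (ENNReal.inv_mul_le_iff (Metric.measure_ball_pos volume c (Metric.pos_of_mem_ball hu)).ne'
    measure_ball_lt_top.ne).mp (le_hlMax f hu)

lemma ENNReal.tsum_le_tsum_rpow_rpow_one_div {ι : Type*} (f : ι → ℝ≥0∞) {p : ℝ} (hp : 0 < p)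
    (hp1 : p ≤ 1) : ∑' i, f i ≤ (∑' i, f i ^ p) ^ (1 / p) := by
  rw [ENNReal.tsum_eq_iSup_sum]
  refine iSup_le fun s => ?_
  have hsum : (∑ i ∈ s, f i) ^ p ≤ ∑ i ∈ s, f i ^ p := by
    classical
    induction s using Finset.induction with
    | empty => simp [ENNReal.zero_rpow_of_pos hp]
    | insert i s hi ih =>
      rw [Finset.sum_insert hi, Finset.sum_insert hi]
      exact (ENNReal.rpow_add_le_add_rpow _ _ hp.le hp1).trans (by gcongr)
  calc ∑ i ∈ s, f i = ((∑ i ∈ s, f i) ^ p) ^ (1 / p) := by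
        rw [← ENNReal.rpow_mul, mul_one_div_cancel hp.ne', ENNReal.rpow_one]
    _ ≤ (∑' i, f i ^ p) ^ (1 / p) := by
        gcongr
        exact hsum.trans (ENNReal.sum_le_tsum s)

lemma two_zpow_mul_tsum_le_setLIntegral {n : ℕ} {j : ℤ} (b : (Fin n → ℤ) → ℝ≥0∞)
    {S : Set (Fin n → ℤ)} {B : Set (EuclideanSpace ℝ (Fin n))}
    (hS : ∀ k ∈ S, dyadicCube n j k ⊆ B) :
    (2 : ℝ≥0∞) ^ (j * n) * ∑' k : S, b k ≤
      ∫⁻ x in B, ∑' k, b k * (dyadicCube n j k).indicator 1 x := by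
  have hmeas := measurableSet_dyadicCube n j
  calc (2 : ℝ≥0∞) ^ (j * n) * ∑' k : S, b k
      = ∑' k : S, ∫⁻ x in B, b k * (dyadicCube n j k).indicator 1 x := by
        rw [← ENNReal.tsum_mul_left]
        congr with k
        rw [lintegral_const_mul _ (measurable_one.indicator (hmeas k)),
          lintegral_indicator_one (hmeas k), Measure.restrict_apply (hmeas k),
          inter_eq_self_of_subset_left (hS k k.2), volume_dyadicCube, mul_comm]
    _ = ∫⁻ x in B, ∑' k : S, b k * (dyadicCube n j k).indicator 1 x :=
        (lintegral_tsum fun k : S =>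
          ((measurable_one.indicator (hmeas k)).const_mul _).aemeasurable).symm
    _ ≤ ∫⁻ x in B, ∑' k, b k * (dyadicCube n j k).indicator 1 x :=
        lintegral_mono fun x => ENNReal.tsum_comp_le_tsum_of_injective Subtype.val_injective _

def annulusIndex (s d : ℝ) : ℕ := sInf {m | d < 2 ^ m * s}

lemma lt_two_pow_annulusIndex_mul {s : ℝ} (hs : 0 < s) (d : ℝ) :
    d < 2 ^ annulusIndex s d * s := by
  refine Nat.sInf_mem (s := {m | d < 2 ^ m * s}) ?_
  obtain ⟨m, hm⟩ := pow_unbounded_of_one_lt (d / s) one_lt_two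
  exact ⟨m, (div_lt_iff₀ hs).mp hm⟩

lemma two_pow_annulusIndex_mul_le {s d : ℝ} (hs : 0 < s) (hd : 0 ≤ d) :
    2 ^ annulusIndex s d * s ≤ 2 * (s + d) := by
  rcases h : annulusIndex s d with _ | m
  · linarith
  · have : ¬d < 2 ^ m * s := Nat.notMem_of_lt_sInf (show m < annulusIndex s d by omega)
    rw [pow_succ]
    linarith

lemma two_rpow_annulusIndex_sub_one_le {s d : ℝ} (hs : 0 < s) (hd : 0 ≤ d) :
    (2 : ℝ≥0∞) ^ ((annulusIndex s d : ℝ) - 1) ≤ ENNReal.ofReal (1 + d / s) := by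
  have hreal : (2 : ℝ) ^ annulusIndex s d ≤ 2 * (1 + d / s) := by
    have := two_pow_annulusIndex_mul_le hs hd
    field_simp
    linarith
  rw [ENNReal.rpow_sub _ _ two_ne_zero ENNReal.ofNat_ne_top, ENNReal.rpow_natCast,
    ENNReal.rpow_one, ENNReal.div_le_iff two_ne_zero ENNReal.ofNat_ne_top,
    ← ENNReal.ofReal_ofNat 2, ← ENNReal.ofReal_pow zero_le_two,
    ← ENNReal.ofReal_mul (by positivity)]
  exact ENNReal.ofReal_le_ofReal (by linarith)

def poissonProfile (n : ℕ) (s : ℝ≥0∞) (d : ℝ) : ℝ≥0∞ :=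
  s ^ (-(n : ℝ)) * (1 + s⁻¹ * ENNReal.ofReal d) ^ (-((n : ℝ) + 1))

lemma poissonProfile_two_zpow_le (n : ℕ) (J : ℤ) {d : ℝ} (hd : 0 ≤ d) {m : ℕ}
    (hm : annulusIndex (2 ^ J) d = m) :
    poissonProfile n (2 ^ J) d ≤ 2 ^ (-(J * n : ℝ) + (n + 1) * (1 - m)) := by
  have hs : (0 : ℝ) < 2 ^ J := by positivity
  have hbase : 1 + ((2 : ℝ≥0∞) ^ J)⁻¹ * ENNReal.ofReal d = ENNReal.ofReal (1 + d / 2 ^ J) := by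
    rw [ENNReal.ofReal_add zero_le_one (by positivity), ENNReal.ofReal_one,
      ENNReal.ofReal_div_of_pos hs, ENNReal.ofReal_two_zpow, ENNReal.div_eq_inv_mul]
  have hscale : ((2 : ℝ≥0∞) ^ J) ^ (-(n : ℝ)) = 2 ^ (-(J * n : ℝ)) := by
    rw [← ENNReal.rpow_intCast, ← ENNReal.rpow_mul, neg_mul_eq_mul_neg]
  rw [poissonProfile, hbase, hscale, ENNReal.rpow_add _ _ two_ne_zero ENNReal.ofNat_ne_top]
  gcongr
  calc ENNReal.ofReal (1 + d / 2 ^ J) ^ (-((n : ℝ) + 1))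
      ≤ ((2 : ℝ≥0∞) ^ ((annulusIndex (2 ^ J) d : ℝ) - 1)) ^ (-((n : ℝ) + 1)) := by
        rw [ENNReal.rpow_neg, ENNReal.rpow_neg]
        gcongr
        exact two_rpow_annulusIndex_sub_one_le hs hd
    _ = 2 ^ ((n + 1) * (1 - m : ℝ)) := by
        rw [← ENNReal.rpow_mul, hm]
        ring_nf

lemma tsum_annulus_le {n : ℕ} {r : ℝ} (hr0 : 0 < r) (hr1 : r ≤ 1) {j J : ℤ} (hjJ : j ≤ J)
    (a : (Fin n → ℤ) → ℝ≥0∞) {xc : (Fin n → ℤ) → EuclideanSpace ℝ (Fin n)}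
    (hxc : ∀ k, xc k ∈ dyadicCube n j k) (u : EuclideanSpace ℝ (Fin n)) (m : ℕ) :
    ∑' k : (fun k => annulusIndex (2 ^ J) ‖u - xc k‖) ⁻¹' {m}, a k ≤
      (volume (Metric.ball (0 : EuclideanSpace ℝ (Fin n)) (1 + √n)) *
        2 ^ (((m + J - j) * n : ℝ)) *
        hlMax n (fun x => ∑' k, a k ^ r * (dyadicCube n j k).indicator 1 x) u) ^ (1 / r) := by
  set t : ℝ := 2 ^ ((m + J : ℝ))
  have ht : 0 < t := by positivity
  have hsub : ∀ k ∈ (fun k => annulusIndex (2 ^ J) ‖u - xc k‖) ⁻¹' {m},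
      dyadicCube n j k ⊆ Metric.ball u (t * (1 + √n)) := by
    intro k hk
    have hdist : ‖u - xc k‖ < t := by
      have := lt_two_pow_annulusIndex_mul (zpow_pos two_pos J) ‖u - xc k‖
      rwa [show annulusIndex _ _ = m from hk, ← Real.rpow_natCast, ← Real.rpow_intCast,
        ← Real.rpow_add two_pos] at this
    have hcube : (2 : ℝ) ^ j ≤ t := by
      rw [← Real.rpow_intCast]
      exact Real.rpow_le_rpow_of_exponent_le one_le_two
        (by linarith [(Int.cast_le (R := ℝ)).mpr hjJ, m.cast_nonneg (α := ℝ)])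
    refine (dyadicCube_subset_ball (hxc k) hdist).trans (Metric.ball_subset_ball ?_)
    nlinarith [Real.sqrt_nonneg n]
  have hvol : volume (Metric.ball u (t * (1 + √n))) =
      volume (Metric.ball (0 : EuclideanSpace ℝ (Fin n)) (1 + √n)) * 2 ^ (((m + J) * n : ℝ)) := by
    rw [Measure.addHaar_ball_mul_of_pos _ _ ht, finrank_euclideanSpace_fin, mul_comm,
      ← Real.rpow_natCast, ← Real.rpow_mul zero_le_two, ← ENNReal.ofReal_rpow_of_pos two_pos,
      ENNReal.ofReal_ofNat]
  have hsum : ∑' k : (fun k => annulusIndex (2 ^ J) ‖u - xc k‖) ⁻¹' {m}, a k ^ r ≤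
      volume (Metric.ball (0 : EuclideanSpace ℝ (Fin n)) (1 + √n)) *
        2 ^ (((m + J - j) * n : ℝ)) *
        hlMax n (fun x => ∑' k, a k ^ r * (dyadicCube n j k).indicator 1 x) u := by
    have := (two_zpow_mul_tsum_le_setLIntegral (fun k => a k ^ r) hsub).trans
      (setLIntegral_ball_le_volume_mul_hlMax _ (Metric.mem_ball_self (by positivity)))
    rw [hvol, ← ENNReal.rpow_intCast,
      ENNReal.mul_le_iff_le_inv (by positivity) (by simp [ENNReal.rpow_eq_top_iff])] at this
    refine this.trans_eq ?_
    rw [← ENNReal.rpow_neg, sub_mul, sub_eq_add_neg, ENNReal.rpow_add _ _ two_ne_zero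
      ENNReal.ofNat_ne_top]
    push_cast
    ring
  calc _ ≤ (∑' k : (fun k => annulusIndex (2 ^ J) ‖u - xc k‖) ⁻¹' {m}, a k ^ r) ^ (1 / r) :=
        ENNReal.tsum_le_tsum_rpow_rpow_one_div _ hr0 hr1
    _ ≤ _ := ENNReal.rpow_le_rpow hsum (by positivity)

lemma annulus_bound_eq_geometric (n : ℕ) {r : ℝ} (hr : 0 ≤ r) (j J : ℤ) (m : ℕ) (V M : ℝ≥0∞) :
    (2 : ℝ≥0∞) ^ (j * n) * 2 ^ (-(J * n : ℝ) + (n + 1) * (1 - m)) *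
        (V * 2 ^ (((m + J - j) * n : ℝ)) * M) ^ (1 / r) =
      2 ^ ((n : ℝ) + 1) * V ^ (1 / r) * (2 : ℝ≥0∞) ^ (((n : ℝ) * ((J - j : ℤ) : ℝ)) * (1 / r - 1)) *
        M ^ (1 / r) * (2 ^ ((n : ℝ) / r - (n + 1))) ^ m := by
  have h2 : ∀ x y : ℝ, (2 : ℝ≥0∞) ^ (x + y) = 2 ^ x * 2 ^ y := fun x y =>
    ENNReal.rpow_add x y two_ne_zero ENNReal.ofNat_ne_top
  have hnn : 0 ≤ 1 / r := one_div_nonneg.mpr hr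
  rw [ENNReal.mul_rpow_of_nonneg _ _ hnn, ENNReal.mul_rpow_of_nonneg _ _ hnn, ← ENNReal.rpow_mul,
    ← ENNReal.rpow_intCast, ← ENNReal.rpow_natCast, ← ENNReal.rpow_mul]
  calc _ = 2 ^ (((j * n : ℤ) : ℝ) + (-(J * n : ℝ) + (n + 1) * (1 - m)) + (m + J - j) * n * (1 / r))
        * V ^ (1 / r) * M ^ (1 / r) := by
          conv_rhs => rw [h2, h2]
          ring
    _ = 2 ^ ((n : ℝ) + 1 + n * ((J - j : ℤ) : ℝ) * (1 / r - 1) + ((n : ℝ) / r - (n + 1)) * m)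
        * V ^ (1 / r) * M ^ (1 / r) := by push_cast; ring_nf
    _ = _ := by
          conv_lhs => rw [h2, h2]
          ring

def majorizationConst (n : ℕ) (r : ℝ) : ℝ≥0∞ :=
  2 ^ ((n : ℝ) + 1) * volume (Metric.ball (0 : EuclideanSpace ℝ (Fin n)) (1 + √n)) ^ (1 / r) *
    (1 - 2 ^ ((n : ℝ) / r - (n + 1)))⁻¹

lemma majorizationConst_pos (n : ℕ) (r : ℝ) : 0 < majorizationConst n r := by
  have hV : volume (Metric.ball (0 : EuclideanSpace ℝ (Fin n)) (1 + √n)) ≠ 0 :=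
    (Metric.measure_ball_pos _ _ (by positivity)).ne'
  refine ENNReal.mul_pos (mul_ne_zero (by simp) ?_) (by simp)
  simp [ENNReal.rpow_eq_zero_iff, hV, measure_ball_lt_top.ne]

lemma majorizationConst_ne_top {n : ℕ} {r : ℝ} (hr : (n : ℝ) / (n + 1) < r) :
    majorizationConst n r ≠ ⊤ := by
  have hr0 : 0 < r := lt_of_le_of_lt (by positivity) hr
  have hq : (2 : ℝ≥0∞) ^ ((n : ℝ) / r - (n + 1)) < 1 := by
    refine ENNReal.rpow_lt_one_of_one_lt_of_neg ENNReal.one_lt_two ?_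
    rw [sub_neg, div_lt_iff₀ hr0]
    rwa [div_lt_iff₀ (by positivity), mul_comm] at hr
  exact ENNReal.mul_ne_top (ENNReal.mul_ne_top (by simp)
    (ENNReal.rpow_ne_top_of_nonneg (by positivity) measure_ball_lt_top.ne))
    (ENNReal.inv_ne_top.mpr (tsub_pos_of_lt hq).ne')

lemma tsum_mul_poissonProfile_le {n : ℕ} {r : ℝ} (hr0 : 0 < r) (hr1 : r ≤ 1) {j J : ℤ}
    (hjJ : j ≤ J) (a : (Fin n → ℤ) → ℝ≥0∞) {xc : (Fin n → ℤ) → EuclideanSpace ℝ (Fin n)}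
    (hxc : ∀ k, xc k ∈ dyadicCube n j k) (u : EuclideanSpace ℝ (Fin n)) :
    ∑' k, 2 ^ (j * n) * a k * poissonProfile n (2 ^ J) ‖u - xc k‖ ≤
      majorizationConst n r * 2 ^ (((n : ℝ) * ((J - j : ℤ) : ℝ)) * (1 / r - 1)) *
        hlMax n (fun x => ∑' k, a k ^ r * (dyadicCube n j k).indicator 1 x) u ^ (1 / r) := by
  set V := volume (Metric.ball (0 : EuclideanSpace ℝ (Fin n)) (1 + √n))
  set M := hlMax n (fun x => ∑' k, a k ^ r * (dyadicCube n j k).indicator 1 x) u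
  set idx := fun k => annulusIndex (2 ^ J) ‖u - xc k‖
  calc ∑' k, 2 ^ (j * n) * a k * poissonProfile n (2 ^ J) ‖u - xc k‖
      = ∑' m : ℕ, ∑' k : idx ⁻¹' {m}, 2 ^ (j * n) * a k *
          poissonProfile n (2 ^ J) ‖u - xc k‖ := (ENNReal.tsum_fiberwise _ idx).symm
    _ ≤ ∑' m : ℕ, ∑' k : idx ⁻¹' {m},
          2 ^ (j * n) * 2 ^ (-(J * n : ℝ) + (n + 1) * (1 - m)) * a k := by
        refine ENNReal.tsum_le_tsum fun m => ENNReal.tsum_le_tsum fun ⟨k, hk⟩ => ?_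
        rw [mul_right_comm]
        gcongr
        exact poissonProfile_two_zpow_le n J (norm_nonneg _) hk
    _ ≤ ∑' m : ℕ, 2 ^ (j * n) * 2 ^ (-(J * n : ℝ) + (n + 1) * (1 - m)) *
          (V * 2 ^ (((m + J - j) * n : ℝ)) * M) ^ (1 / r) := by
        simp_rw [ENNReal.tsum_mul_left]
        gcongr with m
        exact tsum_annulus_le hr0 hr1 hjJ a hxc u m
    _ = ∑' m : ℕ, 2 ^ ((n : ℝ) + 1) * V ^ (1 / r) *
          2 ^ (((n : ℝ) * ((J - j : ℤ) : ℝ)) * (1 / r - 1)) * M ^ (1 / r) *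
          (2 ^ ((n : ℝ) / r - (n + 1))) ^ m :=
        tsum_congr fun m => annulus_bound_eq_geometric n hr0.le j J m V M
    _ = _ := by
        rw [ENNReal.tsum_mul_left, ENNReal.tsum_geometric, majorizationConst]
        ring

theorem discrete_majorization_one_parameter_general (n : ℕ)
    (r : ℝ) (hr1 : (n : ℝ) / (n + 1) < r) (hr2 : r ≤ 1) :
    ∃ C : ℝ≥0∞, 0 < C ∧ C ≠ ⊤ ∧ ∀ j j' : ℤ, ∀ a : (Fin n → ℤ) → ℝ≥0∞,
      ∀ xc : (Fin n → ℤ) → EuclideanSpace ℝ (Fin n),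
        (∀ k, xc k ∈ dyadicCube n j' k) →
      ∀ u : EuclideanSpace ℝ (Fin n),
        (∑' k : Fin n → ℤ,
            (2 : ℝ≥0∞) ^ (j' * (n : ℤ)) * a k *
              (((2 : ℝ≥0∞) ^ (max j j')) ^ (-(n : ℝ)) *
                (1 + ((2 : ℝ≥0∞) ^ (max j j'))⁻¹ *
                    ENNReal.ofReal ‖u - xc k‖) ^ (-((n : ℝ) + 1))))
          ≤ C * (2 : ℝ≥0∞) ^ (((n : ℝ) * ((max j j' - j' : ℤ) : ℝ)) * (1 / r - 1)) *
              (hlMax n (fun x => ∑' k : Fin n → ℤ,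
                  (a k) ^ r * (dyadicCube n j' k).indicator 1 x) u) ^ (1 / r) :=
  ⟨majorizationConst n r, majorizationConst_pos n r, majorizationConst_ne_top hr1,
    fun j j' a xc hxc u => tsum_mul_poissonProfile_le (lt_of_le_of_lt (by positivity) hr1) hr2
      (le_max_right j j') a hxc u⟩

/-- One-parameter discrete majorization lemma: for `n/(n+1) < r ≤ 1` and scales
`s = 2^{j∨j'}`, sums of sampled values over dyadic cubes of side `2^{j'}` against a
Poisson-type profile at scale `s` are dominated by the `r`-maximal function, with loss
`2^{n(j∨j'−j')(1/r−1)}`. -/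
theorem discrete_majorization_one_parameter (n : ℕ) (hn : 1 ≤ n)
    (r : ℝ) (hr1 : (n : ℝ) / (n + 1) < r) (hr2 : r ≤ 1) :
    ∃ C : ℝ≥0∞, 0 < C ∧ C ≠ ⊤ ∧ ∀ j j' : ℤ, ∀ a : (Fin n → ℤ) → ℝ≥0∞,
      ∀ xc : (Fin n → ℤ) → EuclideanSpace ℝ (Fin n),
        (∀ k, xc k ∈ dyadicCube n j' k) →
      ∀ u : EuclideanSpace ℝ (Fin n),
        (∑' k : Fin n → ℤ,
            (2 : ℝ≥0∞) ^ (j' * (n : ℤ)) * a k *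
              (((2 : ℝ≥0∞) ^ (max j j')) ^ (-(n : ℝ)) *
                (1 + ((2 : ℝ≥0∞) ^ (max j j'))⁻¹ *
                    ENNReal.ofReal ‖u - xc k‖) ^ (-((n : ℝ) + 1))))
          ≤ C * (2 : ℝ≥0∞) ^ (((n : ℝ) * ((max j j' - j' : ℤ) : ℝ)) * (1 / r - 1)) *
              (hlMax n (fun x => ∑' k : Fin n → ℤ,
                  (a k) ^ r * (dyadicCube n j' k).indicator 1 x) u) ^ (1 / r) :=
  discrete_majorization_one_parameter_general n r hr1 hr2

end
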